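/- Let 𝒳 ⊆ L⁰₊, let Y ∈ L⁰₊ satisfy Y > 0 P-a.s., and for W ∈ L⁰₊ define O_W^𝒳 := sc{(X − W)₊ : X ∈ 𝒳}. Then ⋂ₙ O_n^𝒳 = {0} if and only if ⋂ₙ O_{nY}^𝒳 = {0}, where 'S = {0}' means the only element of L⁰₊ belonging to S is 0 a.e. -/

import Mathlib

open MeasureTheory Filter Topology

/-- `L⁰₊`: (representatives of) measurable functions that are nonnegative `P`-a.s. -/
def L0pos {Ω : Type*} [MeasurableSpace Ω] (P : Measure Ω) : Set (Ω → ℝ) :=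
  {X | Measurable X ∧ ∀ᵐ ω ∂P, 0 ≤ X ω}

/-- `sc S`: the solid hull of the convex hull of `S`. -/
def scSet {Ω : Type*} [MeasurableSpace Ω] (P : Measure Ω) (S : Set (Ω → ℝ)) :
    Set (Ω → ℝ) :=
  {Z | Z ∈ L0pos P ∧ ∃ W ∈ convexHull ℝ S, ∀ᵐ ω ∂P, Z ω ≤ W ω}

/-- `O_W^𝒳 = sc {(X - W)₊ : X ∈ 𝒳}`. -/
def OsetW {Ω : Type*} [MeasurableSpace Ω] (P : Measure Ω) (𝒳 : Set (Ω → ℝ))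
    (W : Ω → ℝ) : Set (Ω → ℝ) :=
  scSet P {f | ∃ X ∈ 𝒳, f = fun ω => max (X ω - W ω) 0}

/-!
Lowering the threshold `W` only enlarges `(X - W)₊`, so if `W₂ ≤ W₁` on a set `A`, every
element of `O_{W₁}`, cut off outside `A`, lies in `O_{W₂}`. On `{Y ≥ 1/(k+1)}` the constant `n`
is below `n (k+1) Y`, and on `{Y ≤ k+1}` the function `n Y` is below `n (k+1)`; since `Y` is
a.s. positive and finite, countably many such sets cover `Ω` up to a null set, so an element
of one intersection restricts on each of them to an element of the other intersection.
-/

section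

variable {Ω : Type*} [MeasurableSpace Ω] {P : Measure Ω}

lemma ae_nonneg_of_mem_convexHull {T : Set (Ω → ℝ)} (hT : ∀ g ∈ T, ∀ᵐ ω ∂P, 0 ≤ g ω)
    {W : Ω → ℝ} (hW : W ∈ convexHull ℝ T) : ∀ᵐ ω ∂P, 0 ≤ W ω := by
  refine convexHull_min hT (fun f hf g hg a b ha hb _ => ?_) hW
  filter_upwards [show ∀ᵐ ω ∂P, 0 ≤ f ω from hf, show ∀ᵐ ω ∂P, 0 ≤ g ω from hg]
    with ω hfω hgω
  simp only [Pi.add_apply, Pi.smul_apply, smul_eq_mul]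
  positivity

lemma exists_mem_convexHull_ae_le_on {S T : Set (Ω → ℝ)} {A : Set Ω}
    (hST : ∀ f ∈ S, ∃ g ∈ T, ∀ᵐ ω ∂P, ω ∈ A → f ω ≤ g ω)
    {W : Ω → ℝ} (hW : W ∈ convexHull ℝ S) :
    ∃ W' ∈ convexHull ℝ T, ∀ᵐ ω ∂P, ω ∈ A → W ω ≤ W' ω := by
  refine convexHull_min (t := {W | ∃ W' ∈ convexHull ℝ T, ∀ᵐ ω ∂P, ω ∈ A → W ω ≤ W' ω})
    (fun f hf => ?_) ?_ hW
  · obtain ⟨g, hg, hfg⟩ := hST f hf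
    exact ⟨g, subset_convexHull ℝ T hg, hfg⟩
  · rintro f ⟨f', hf', hff'⟩ g ⟨g', hg', hgg'⟩ a b ha hb hab
    refine ⟨a • f' + b • g', convex_convexHull ℝ T hf' hg' ha hb hab, ?_⟩
    filter_upwards [hff', hgg'] with ω hfω hgω hω
    simp only [Pi.add_apply, Pi.smul_apply, smul_eq_mul]
    gcongr
    exacts [hfω hω, hgω hω]

lemma indicator_mem_scSet {S T : Set (Ω → ℝ)} {A : Set Ω} (hA : MeasurableSet A)
    (hT : ∀ g ∈ T, ∀ᵐ ω ∂P, 0 ≤ g ω)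
    (hST : ∀ f ∈ S, ∃ g ∈ T, ∀ᵐ ω ∂P, ω ∈ A → f ω ≤ g ω)
    {Z : Ω → ℝ} (hZ : Z ∈ scSet P S) : A.indicator Z ∈ scSet P T := by
  obtain ⟨⟨hZm, hZnn⟩, W, hW, hZW⟩ := hZ
  obtain ⟨W', hW', hWW'⟩ := exists_mem_convexHull_ae_le_on hST hW
  refine ⟨⟨hZm.indicator hA, ?_⟩, W', hW', ?_⟩
  · filter_upwards [hZnn] with ω hω
    exact Set.indicator_nonneg (fun _ _ => hω) ω
  · filter_upwards [hZW, hWW', ae_nonneg_of_mem_convexHull hT hW'] with ω hZω hWω hW'ω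
    by_cases hωA : ω ∈ A
    · rw [Set.indicator_of_mem hωA]
      exact hZω.trans (hWω hωA)
    · rwa [Set.indicator_of_notMem hωA]

lemma indicator_mem_OsetW {𝒳 : Set (Ω → ℝ)} {W₁ W₂ : Ω → ℝ} {A : Set Ω}
    (hA : MeasurableSet A) (hW : ∀ᵐ ω ∂P, ω ∈ A → W₂ ω ≤ W₁ ω) {Z : Ω → ℝ}
    (hZ : Z ∈ OsetW P 𝒳 W₁) : A.indicator Z ∈ OsetW P 𝒳 W₂ := by
  refine indicator_mem_scSet hA ?_ ?_ hZ
  · rintro _ ⟨X, -, rfl⟩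
    exact ae_of_all _ fun ω => le_max_right _ _
  · rintro _ ⟨X, hX, rfl⟩
    refine ⟨_, ⟨X, hX, rfl⟩, ?_⟩
    filter_upwards [hW] with ω hω hωA
    exact max_le_max (by linarith [hω hωA]) le_rfl

lemma ae_eq_zero_of_forall_indicator {A : ℕ → Set Ω} (hcover : ∀ᵐ ω ∂P, ∃ k, ω ∈ A k)
    {Z : Ω → ℝ} (hZ : ∀ k, ∀ᵐ ω ∂P, (A k).indicator Z ω = 0) : ∀ᵐ ω ∂P, Z ω = 0 := by
  filter_upwards [hcover, ae_all_iff.2 hZ] with ω ⟨k, hk⟩ hω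
  simpa [Set.indicator_of_mem hk] using hω k

lemma forall_ae_eq_zero_of_dominated_on_cover {𝒳 : Set (Ω → ℝ)} {V W : ℕ → Ω → ℝ}
    {A : ℕ → Set Ω} (hA : ∀ k, MeasurableSet (A k)) (hcover : ∀ᵐ ω ∂P, ∃ k, ω ∈ A k)
    (hVW : ∀ k n, ∃ m, ∀ᵐ ω ∂P, ω ∈ A k → V n ω ≤ W m ω)
    (hV : ∀ Z : Ω → ℝ, (∀ n, Z ∈ OsetW P 𝒳 (V n)) → ∀ᵐ ω ∂P, Z ω = 0)
    {Z : Ω → ℝ} (hZ : ∀ m, Z ∈ OsetW P 𝒳 (W m)) : ∀ᵐ ω ∂P, Z ω = 0 := by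
  refine ae_eq_zero_of_forall_indicator hcover fun k => hV _ fun n => ?_
  obtain ⟨m, hm⟩ := hVW k n
  exact indicator_mem_OsetW (hA k) hm (hZ m)

end

theorem stmt_16_general {Ω : Type*} [MeasurableSpace Ω] (P : Measure Ω)
    (𝒳 : Set (Ω → ℝ))
    (Y : Ω → ℝ) (hY : Y ∈ L0pos P) (hYpos : ∀ᵐ ω ∂P, 0 < Y ω) :
    (∀ Z : Ω → ℝ, (∀ n : ℕ, Z ∈ OsetW P 𝒳 (fun _ => (n : ℝ))) → ∀ᵐ ω ∂P, Z ω = 0) ↔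
    (∀ Z : Ω → ℝ, (∀ n : ℕ, Z ∈ OsetW P 𝒳 (fun ω => n * Y ω)) → ∀ᵐ ω ∂P, Z ω = 0) := by
  constructor
  · intro H Z hZ
    refine forall_ae_eq_zero_of_dominated_on_cover (V := fun n _ => (n : ℝ))
      (A := fun k => Y ⁻¹' Set.Ici (1 / ((k : ℝ) + 1))) (fun k => hY.1 measurableSet_Ici)
      ?_ (fun k n => ⟨n * (k + 1), ae_of_all _ fun ω (hω : 1 / ((k : ℝ) + 1) ≤ Y ω) => ?_⟩)
      H hZ
    · filter_upwards [hYpos] with ω hω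
      obtain ⟨k, hk⟩ := exists_nat_one_div_lt hω
      exact ⟨k, hk.le⟩
    · rw [div_le_iff₀ (by positivity)] at hω
      push_cast
      nlinarith [(n.cast_nonneg : (0 : ℝ) ≤ n)]
  · intro H Z hZ
    refine forall_ae_eq_zero_of_dominated_on_cover (V := fun n ω => n * Y ω)
      (A := fun k => Y ⁻¹' Set.Iic ((k : ℝ) + 1)) (fun k => hY.1 measurableSet_Iic)
      (ae_of_all _ fun ω => ?_)
      (fun k n => ⟨n * (k + 1), ae_of_all _ fun ω (hω : Y ω ≤ (k : ℝ) + 1) => ?_⟩) H hZ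
    · obtain ⟨k, hk⟩ := exists_nat_ge (Y ω)
      exact ⟨k, show Y ω ≤ (k : ℝ) + 1 by linarith⟩
    · push_cast
      nlinarith [(n.cast_nonneg : (0 : ℝ) ≤ n)]

/-- For a.s. strictly positive `Y`, `⋂ₙ O_n^𝒳 = {0}` iff `⋂ₙ O_{nY}^𝒳 = {0}`. -/
theorem stmt_16 {Ω : Type*} [MeasurableSpace Ω] (P : Measure Ω) [IsProbabilityMeasure P]
    (𝒳 : Set (Ω → ℝ)) (h𝒳 : 𝒳 ⊆ L0pos P)
    (Y : Ω → ℝ) (hY : Y ∈ L0pos P) (hYpos : ∀ᵐ ω ∂P, 0 < Y ω) :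
    (∀ Z : Ω → ℝ, (∀ n : ℕ, Z ∈ OsetW P 𝒳 (fun _ => (n : ℝ))) → ∀ᵐ ω ∂P, Z ω = 0) ↔
    (∀ Z : Ω → ℝ, (∀ n : ℕ, Z ∈ OsetW P 𝒳 (fun ω => n * Y ω)) → ∀ᵐ ω ∂P, Z ω = 0) :=
  stmt_16_general P 𝒳 Y hY hYpos
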